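/- Let F and B be n × n column-stochastic matrices, let 0 < α₁, α₂, α₃ < 1, and let d ∈ ℝⁿ. For any initial vector t⁽⁰⁾ ∈ ℝⁿ, the iterative process t⁽ᵏ⁺¹⁾ = α₁ F P₊(t⁽ᵏ⁾) + α₂ B P₋(t⁽ᵏ⁾) + α₃ d converges (in the ℓ¹ norm) to the unique solution t of the RepRank equation t = α₁ F P₊(t) + α₂ B P₋(t) + α₃ d. -/

import Mathlib

open Finset Filter

/-- Replace negative components by zero. -/
def Ppos {n : ℕ} (t : Fin n → ℝ) : Fin n → ℝ := fun i => max (t i) 0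

/-- Replace positive components by zero. -/
def Pneg {n : ℕ} (t : Fin n → ℝ) : Fin n → ℝ := fun i => min (t i) 0

/-- ℓ¹ norm on ℝⁿ. -/
def l1 {n : ℕ} (x : Fin n → ℝ) : ℝ := ∑ i, |x i|

/-- A matrix is column-stochastic if entries are nonnegative and each column sums to 1. -/
def ColStochastic {n : ℕ} (F : Matrix (Fin n) (Fin n) ℝ) : Prop :=
  (∀ i j, 0 ≤ F i j) ∧ ∀ j, ∑ i, F i j = 1

/-! The RepRank map is a contraction for the ℓ¹ norm with constant `max α₁ α₂`: the parts
`P₊(t) - P₊(s)` and `P₋(t) - P₋(s)` split `|t - s|` componentwise, and a column-stochastic matrix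
does not increase the ℓ¹ norm. Banach's fixed point theorem on `ℓ¹(Fin n)` does the rest. -/

open scoped Matrix Topology

lemma abs_max_sub_max_add_abs_min_sub_min (a b : ℝ) :
    |max a 0 - max b 0| + |min a 0 - min b 0| = |a - b| := by
  have hsum : (max a 0 - max b 0) + (min a 0 - min b 0) = a - b := by
    linarith [min_add_max a 0, min_add_max b 0]
  -- both parts are monotone in the argument, so they carry the sign of `a - b`
  rw [← hsum, eq_comm, abs_add_eq_add_abs_iff]
  rcases le_total b a with h | h
  · exact .inl ⟨sub_nonneg.2 (max_le_max_right 0 h), sub_nonneg.2 (min_le_min_right 0 h)⟩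
  · exact .inr ⟨sub_nonpos.2 (max_le_max_right 0 h), sub_nonpos.2 (min_le_min_right 0 h)⟩

section l1

variable {n : ℕ}

lemma l1_eq_norm_toLp (x : Fin n → ℝ) : l1 x = ‖WithLp.toLp 1 x‖ := by
  rw [PiLp.norm_eq_sum (by norm_num)]
  simp [l1]

lemma l1_nonneg (x : Fin n → ℝ) : 0 ≤ l1 x := by
  rw [l1_eq_norm_toLp]
  exact norm_nonneg _

lemma l1_add_le (x y : Fin n → ℝ) : l1 (x + y) ≤ l1 x + l1 y := by
  simpa only [l1_eq_norm_toLp, WithLp.toLp_add] using norm_add_le _ _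

lemma l1_smul (c : ℝ) (x : Fin n → ℝ) : l1 (c • x) = |c| * l1 x := by
  simp only [l1_eq_norm_toLp, WithLp.toLp_smul, norm_smul, Real.norm_eq_abs]

lemma l1_Ppos_sub_add_l1_Pneg_sub (x y : Fin n → ℝ) :
    l1 (Ppos x - Ppos y) + l1 (Pneg x - Pneg y) = l1 (x - y) := by
  simp only [l1, ← sum_add_distrib, Pi.sub_apply, Ppos, Pneg, abs_max_sub_max_add_abs_min_sub_min]

lemma ColStochastic.l1_mulVec_le {F : Matrix (Fin n) (Fin n) ℝ} (hF : ColStochastic F)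
    (v : Fin n → ℝ) : l1 (F *ᵥ v) ≤ l1 v :=
  calc l1 (F *ᵥ v) = ∑ i, |∑ j, F i j * v j| := rfl
    _ ≤ ∑ i, ∑ j, F i j * |v j| := by
      gcongr with i
      refine (abs_sum_le_sum_abs _ _).trans_eq (sum_congr rfl fun j _ => ?_)
      rw [abs_mul, abs_of_nonneg (hF.1 i j)]
    _ = ∑ j, |v j| := by
      rw [sum_comm]
      exact sum_congr rfl fun j _ => by rw [← sum_mul, hF.2 j, one_mul]

theorem exists_fixedPoint_tendsto_of_l1_le_mul {f : (Fin n → ℝ) → Fin n → ℝ} {K : ℝ}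
    (hK : K < 1) (hf : ∀ x y, l1 (f x - f y) ≤ K * l1 (x - y))
    (u : ℕ → Fin n → ℝ) (hu : ∀ k, u (k + 1) = f (u k)) :
    ∃ t, f t = t ∧ (∀ t', f t' = t' → t' = t) ∧ Tendsto (fun k => l1 (u k - t)) atTop (𝓝 0) := by
  set g : PiLp 1 (fun _ : Fin n => ℝ) → PiLp 1 (fun _ : Fin n => ℝ) :=
    fun x => WithLp.toLp 1 (f x.ofLp)
  have hg : ContractingWith K.toNNReal g := by
    refine ⟨Real.toNNReal_lt_one.2 hK, LipschitzWith.of_dist_le_mul fun x y => ?_⟩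
    rw [dist_eq_norm, dist_eq_norm, ← WithLp.toLp_sub, ← l1_eq_norm_toLp,
      ← WithLp.toLp_ofLp 1 (x - y), ← l1_eq_norm_toLp, WithLp.ofLp_sub]
    exact (hf _ _).trans (mul_le_mul_of_nonneg_right (Real.le_coe_toNNReal K) (l1_nonneg _))
  have hfix : g (hg.fixedPoint g) = hg.fixedPoint g := hg.fixedPoint_isFixedPt
  have horbit : ∀ k, WithLp.toLp 1 (u k) = g^[k] (WithLp.toLp 1 (u 0)) := by
    intro k
    induction k with
    | zero => rfl
    | succ k ih => rw [Function.iterate_succ_apply', ← ih, hu]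
  refine ⟨(hg.fixedPoint g).ofLp, congrArg WithLp.ofLp hfix, fun t' ht' => ?_, ?_⟩
  · exact congrArg WithLp.ofLp (hg.fixedPoint_unique (congrArg (WithLp.toLp 1) ht'))
  · have hconv := tendsto_iff_dist_tendsto_zero.1 (hg.tendsto_iterate_fixedPoint (WithLp.toLp 1 (u 0)))
    refine hconv.congr fun k => ?_
    rw [dist_eq_norm, ← horbit, l1_eq_norm_toLp, WithLp.toLp_sub, WithLp.toLp_ofLp]

end l1

def repRankMap {n : ℕ} (F B : Matrix (Fin n) (Fin n) ℝ) (α₁ α₂ α₃ : ℝ) (d t : Fin n → ℝ) :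
    Fin n → ℝ :=
  α₁ • F *ᵥ Ppos t + α₂ • B *ᵥ Pneg t + α₃ • d

lemma l1_repRankMap_sub_le {n : ℕ} {F B : Matrix (Fin n) (Fin n) ℝ} (hF : ColStochastic F)
    (hB : ColStochastic B) {α₁ α₂ : ℝ} (hα₁ : 0 ≤ α₁) (hα₂ : 0 ≤ α₂) (α₃ : ℝ) (d s t : Fin n → ℝ) :
    l1 (repRankMap F B α₁ α₂ α₃ d s - repRankMap F B α₁ α₂ α₃ d t) ≤ max α₁ α₂ * l1 (s - t) :=
  calc l1 (repRankMap F B α₁ α₂ α₃ d s - repRankMap F B α₁ α₂ α₃ d t)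
      = l1 (α₁ • F *ᵥ (Ppos s - Ppos t) + α₂ • B *ᵥ (Pneg s - Pneg t)) := by
        simp only [repRankMap, Matrix.mulVec_sub, smul_sub]
        abel_nf
    _ ≤ α₁ * l1 (F *ᵥ (Ppos s - Ppos t)) + α₂ * l1 (B *ᵥ (Pneg s - Pneg t)) := by
        refine (l1_add_le _ _).trans_eq ?_
        rw [l1_smul, l1_smul, abs_of_nonneg hα₁, abs_of_nonneg hα₂]
    _ ≤ max α₁ α₂ * l1 (Ppos s - Ppos t) + max α₁ α₂ * l1 (Pneg s - Pneg t) := by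
        have hα : 0 ≤ max α₁ α₂ := hα₁.trans (le_max_left _ _)
        exact add_le_add
          (mul_le_mul (le_max_left _ _) (hF.l1_mulVec_le _) (l1_nonneg _) hα)
          (mul_le_mul (le_max_right _ _) (hB.l1_mulVec_le _) (l1_nonneg _) hα)
    _ = max α₁ α₂ * l1 (s - t) := by rw [← mul_add, l1_Ppos_sub_add_l1_Pneg_sub]

theorem repRank_iteration_converges_general {n : ℕ} (F B : Matrix (Fin n) (Fin n) ℝ)
    (hF : ColStochastic F) (hB : ColStochastic B)
    (α₁ α₂ α₃ : ℝ) (hα₁ : 0 < α₁) (hα₁' : α₁ < 1) (hα₂ : 0 < α₂) (hα₂' : α₂ < 1)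
    (d : Fin n → ℝ)
    (u : ℕ → (Fin n → ℝ))
    (hu : ∀ k, u (k + 1) = α₁ • F.mulVec (Ppos (u k)) + α₂ • B.mulVec (Pneg (u k)) + α₃ • d) :
    ∃ t : Fin n → ℝ,
      (t = α₁ • F.mulVec (Ppos t) + α₂ • B.mulVec (Pneg t) + α₃ • d) ∧
      (∀ t' : Fin n → ℝ,
        t' = α₁ • F.mulVec (Ppos t') + α₂ • B.mulVec (Pneg t') + α₃ • d → t' = t) ∧
      Tendsto (fun k => l1 (u k - t)) atTop (nhds 0) := by
  obtain ⟨t, hfix, huniq, hconv⟩ :=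
    exists_fixedPoint_tendsto_of_l1_le_mul (f := repRankMap F B α₁ α₂ α₃ d)
      (max_lt hα₁' hα₂') (l1_repRankMap_sub_le hF hB hα₁.le hα₂.le α₃ d) u hu
  exact ⟨t, hfix.symm, fun t' ht' => huniq t' ht'.symm, hconv⟩

theorem repRank_iteration_converges {n : ℕ} (F B : Matrix (Fin n) (Fin n) ℝ)
    (hF : ColStochastic F) (hB : ColStochastic B)
    (α₁ α₂ α₃ : ℝ) (hα₁ : 0 < α₁) (hα₁' : α₁ < 1) (hα₂ : 0 < α₂) (hα₂' : α₂ < 1)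
    (hα₃ : 0 < α₃) (hα₃' : α₃ < 1) (d : Fin n → ℝ)
    (u : ℕ → (Fin n → ℝ))
    (hu : ∀ k, u (k + 1) = α₁ • F.mulVec (Ppos (u k)) + α₂ • B.mulVec (Pneg (u k)) + α₃ • d) :
    ∃ t : Fin n → ℝ,
      (t = α₁ • F.mulVec (Ppos t) + α₂ • B.mulVec (Pneg t) + α₃ • d) ∧
      (∀ t' : Fin n → ℝ,
        t' = α₁ • F.mulVec (Ppos t') + α₂ • B.mulVec (Pneg t') + α₃ • d → t' = t) ∧
      Tendsto (fun k => l1 (u k - t)) atTop (nhds 0) :=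
  repRank_iteration_converges_general F B hF hB α₁ α₂ α₃ hα₁ hα₁' hα₂ hα₂' d u hu
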